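/- Let m ≥ 1 be an integer and q_m(μ) = (4+mμ)·r_m(μ) with r_m(μ) = 6 + ((19m−25)/4)μ + m(m−5)μ² + ((m³−10m²+15m+10)/16)μ³. For m ≥ 8, q_m(μ) > 0 for all μ > 0. For m = 1 and m = 2, q_m has exactly two positive roots μ_{m,1} < μ_{m,2}, and for μ > 0 one has q_m(μ) ≥ 0 if and only if μ ≤ μ_{m,1} or μ ≥ μ_{m,2}; moreover μ_{1,1} = √(3/2) and μ_{1,2} = 4. For 3 ≤ m ≤ 7, q_m has exactly one positive root μ_m, and for μ > 0 one has q_m(μ) ≥ 0 if and only if μ ≤ μ_m. -/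

import Mathlib

/-!
On `μ > 0` the factor `4 + mμ` is positive, so `q_m` has the sign of the cubic `r_m`, whose
constant term is `6`. For `m ≥ 8` all coefficients of `r_m` are nonnegative. For `3 ≤ m ≤ 7` the
linear coefficient is nonnegative and the leading one negative, so
`r_m(μ)/μ² = 6/μ² + c/μ + b + aμ` is strictly decreasing and `r_m` changes sign exactly once.
For `m = 1, 2` the leading coefficient is nonnegative and `r_m` has two positive roots
`ρ₁ < ρ₂` (explicit for `m = 1`, by the intermediate value theorem for `m = 2`); dividing them
out gives `r_m(μ) = (μ - ρ₁)(μ - ρ₂)(aμ + c)`, and `6 = r_m(0) = ρ₁ρ₂c` forces `c > 0`.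
-/

/-- `r_m(μ)` factor of `q_m(μ) = P_μ^m(1/2)` for type `I_{1,4}`. -/
noncomputable def rI14 (m : ℕ) (μ : ℝ) : ℝ :=
  6 + ((19 * (m : ℝ) - 25) / 4) * μ + (m : ℝ) * ((m : ℝ) - 5) * μ ^ 2 +
    (((m : ℝ) ^ 3 - 10 * (m : ℝ) ^ 2 + 15 * (m : ℝ) + 10) / 16) * μ ^ 3

/-- `q_m(μ) = P_μ^m(1/2) = (4+mμ)·r_m(μ)` for type `I_{1,4}`. -/
noncomputable def qI14 (m : ℕ) (μ : ℝ) : ℝ := (4 + (m : ℝ) * μ) * rI14 m μ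

open Set

theorem nonneg_iff_le_of_strictAntiOn_div_pow {f : ℝ → ℝ} {k : ℕ}
    (hf : StrictAntiOn (fun x => f x / x ^ k) (Ioi 0)) {ρ μ : ℝ} (hρ : 0 < ρ) (hfρ : f ρ = 0)
    (hμ : 0 < μ) : 0 ≤ f μ ↔ μ ≤ ρ := by
  rw [← hf.le_iff_ge hρ hμ]
  simp only [hfρ, zero_div, le_div_iff₀ (pow_pos hμ k), zero_mul]

namespace Cubic

theorem eval_toPoly {R : Type*} [CommSemiring R] (P : Cubic R) (x : R) :
    P.toPoly.eval x = P.a * x ^ 3 + P.b * x ^ 2 + P.c * x + P.d := by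
  simp [toPoly]

variable {P : Cubic ℝ}

theorem eval_pos (hd : 0 < P.d) (hc : 0 ≤ P.c) (hb : 0 ≤ P.b) (ha : 0 ≤ P.a) {x : ℝ}
    (hx : 0 < x) : 0 < P.toPoly.eval x := by
  rw [eval_toPoly]; positivity

theorem strictAntiOn_eval_div_sq (hd : 0 ≤ P.d) (hc : 0 ≤ P.c) (ha : P.a < 0) :
    StrictAntiOn (fun x => P.toPoly.eval x / x ^ 2) (Ioi 0) := by
  intro x (hx : 0 < x) y _ hxy
  have expand (t : ℝ) (ht : t ≠ 0) :
      P.toPoly.eval t / t ^ 2 = P.d / t ^ 2 + P.c / t + P.b + P.a * t := by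
    rw [eval_toPoly]; field_simp; ring
  simp only [expand x hx.ne', expand y (hx.trans hxy).ne']
  have hd' : P.d / y ^ 2 ≤ P.d / x ^ 2 := by gcongr
  have hc' : P.c / y ≤ P.c / x := by gcongr
  have ha' : P.a * y < P.a * x := mul_lt_mul_of_neg_left hxy ha
  linarith

theorem eval_eq_mul_of_roots {ρ₁ ρ₂ : ℝ} (h₁ : P.toPoly.eval ρ₁ = 0) (h₂ : P.toPoly.eval ρ₂ = 0)
    (hne : ρ₁ ≠ ρ₂) (x : ℝ) :
    P.toPoly.eval x = (x - ρ₁) * (x - ρ₂) * (P.a * x + (P.b + P.a * (ρ₁ + ρ₂))) := by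
  rw [eval_toPoly] at *
  -- the difference is linear in `x` and vanishes at `ρ₁` and `ρ₂`
  have key : (ρ₁ - ρ₂) * (P.a * x ^ 3 + P.b * x ^ 2 + P.c * x + P.d -
      (x - ρ₁) * (x - ρ₂) * (P.a * x + (P.b + P.a * (ρ₁ + ρ₂)))) = 0 := by
    linear_combination (x - ρ₂) * h₁ - (x - ρ₁) * h₂
  rcases mul_eq_zero.1 key with h | h
  · exact absurd (sub_eq_zero.1 h) hne
  · exact sub_eq_zero.1 h

theorem exists_eval_eq_mul_of_pos_roots (hd : 0 < P.d) {ρ₁ ρ₂ : ℝ} (hρ₁ : 0 < ρ₁)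
    (hρ : ρ₁ < ρ₂) (h₁ : P.toPoly.eval ρ₁ = 0) (h₂ : P.toPoly.eval ρ₂ = 0) :
    ∃ c > 0, ∀ x, P.toPoly.eval x = (x - ρ₁) * (x - ρ₂) * (P.a * x + c) := by
  have factor := eval_eq_mul_of_roots h₁ h₂ hρ.ne
  refine ⟨_, ?_, factor⟩
  have at_zero : P.d = ρ₁ * ρ₂ * (P.b + P.a * (ρ₁ + ρ₂)) := by
    simpa [eval_toPoly] using factor 0
  rw [at_zero] at hd
  exact pos_of_mul_pos_right hd (mul_pos hρ₁ (hρ₁.trans hρ)).le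

theorem eq_of_eval_eq_zero_of_pos_roots (hd : 0 < P.d) (ha : 0 ≤ P.a) {ρ₁ ρ₂ : ℝ} (hρ₁ : 0 < ρ₁)
    (hρ : ρ₁ < ρ₂) (h₁ : P.toPoly.eval ρ₁ = 0) (h₂ : P.toPoly.eval ρ₂ = 0)
    {x : ℝ} (hx : 0 < x) (h : P.toPoly.eval x = 0) :
    x = ρ₁ ∨ x = ρ₂ := by
  obtain ⟨c, hc, factor⟩ := exists_eval_eq_mul_of_pos_roots hd hρ₁ hρ h₁ h₂
  have : P.a * x + c ≠ 0 := by positivity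
  simpa [factor, this, sub_eq_zero] using h

theorem eval_nonneg_iff_of_pos_roots (hd : 0 < P.d) (ha : 0 ≤ P.a) {ρ₁ ρ₂ : ℝ} (hρ₁ : 0 < ρ₁)
    (hρ : ρ₁ < ρ₂) (h₁ : P.toPoly.eval ρ₁ = 0) (h₂ : P.toPoly.eval ρ₂ = 0)
    {x : ℝ} (hx : 0 < x) :
    0 ≤ P.toPoly.eval x ↔ x ≤ ρ₁ ∨ ρ₂ ≤ x := by
  obtain ⟨c, hc, factor⟩ := exists_eval_eq_mul_of_pos_roots hd hρ₁ hρ h₁ h₂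
  rw [factor, mul_nonneg_iff_of_pos_right (by positivity), sub_mul_sub_nonneg_iff x hρ.le]

end Cubic

noncomputable def rI14Cubic (m : ℕ) : Cubic ℝ :=
  ⟨((m : ℝ) ^ 3 - 10 * (m : ℝ) ^ 2 + 15 * (m : ℝ) + 10) / 16, (m : ℝ) * ((m : ℝ) - 5),
    (19 * (m : ℝ) - 25) / 4, 6⟩

theorem rI14_eq_eval (m : ℕ) (μ : ℝ) : rI14 m μ = (rI14Cubic m).toPoly.eval μ := by
  rw [Cubic.eval_toPoly, rI14, rI14Cubic]; ring

theorem continuous_rI14 (m : ℕ) : Continuous (rI14 m) :=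
  (rI14Cubic m).toPoly.continuous.congr fun μ => (rI14_eq_eval m μ).symm

theorem exists_rI14_eq_zero_of_mem_uIcc (m : ℕ) {a b : ℝ} (hab : a ≤ b)
    (h : 0 ∈ uIcc (rI14 m a) (rI14 m b)) : ∃ ρ ∈ Icc a b, rI14 m ρ = 0 := by
  rw [← uIcc_of_le hab]
  exact intermediate_value_uIcc (continuous_rI14 m).continuousOn h

theorem qI14_eq_zero_iff {m : ℕ} {μ : ℝ} (hμ : 0 < μ) : qI14 m μ = 0 ↔ rI14 m μ = 0 := by
  rw [qI14, mul_eq_zero, or_iff_right (by positivity)]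

theorem qI14_nonneg_iff {m : ℕ} {μ : ℝ} (hμ : 0 < μ) : 0 ≤ qI14 m μ ↔ 0 ≤ rI14 m μ :=
  mul_nonneg_iff_of_pos_left (by positivity)

theorem qI14_pos {m : ℕ} (hm : 8 ≤ m) {μ : ℝ} (hμ : 0 < μ) : 0 < qI14 m μ := by
  have hm : (8 : ℝ) ≤ m := by exact_mod_cast hm
  have hr : 0 < rI14 m μ := by
    rw [rI14_eq_eval]
    refine Cubic.eval_pos ?_ ?_ ?_ ?_ hμ <;> simp only [rI14Cubic]
    · norm_num
    · linarith
    · nlinarith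
    · -- `m³ - 10m² + 15m + 10 = (m - 8)(m² - 2m - 1) + 2`
      nlinarith [mul_nonneg (sub_nonneg.2 hm) (by nlinarith : (0 : ℝ) ≤ (m : ℝ) ^ 2 - 2 * m - 1)]
  exact mul_pos (by positivity) hr

theorem rI14_one_sqrt : rI14 1 (√(3 / 2)) = 0 := by
  have hs : √(3 / 2) ^ 2 = 3 / 2 := Real.sq_sqrt (by norm_num)
  rw [rI14]; push_cast
  linear_combination (√(3 / 2) - 4) * hs

theorem rI14_one_four : rI14 1 4 = 0 := by norm_num [rI14]

theorem sqrt_three_halves_lt_four : √(3 / 2) < 4 :=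
  (Real.sqrt_lt' (by norm_num)).2 (by norm_num)

theorem exists_two_pos_roots_rI14 {m : ℕ} (h1 : 1 ≤ m) (h2 : m ≤ 2) :
    ∃ ρ₁ ρ₂, 0 < ρ₁ ∧ ρ₁ < ρ₂ ∧ rI14 m ρ₁ = 0 ∧ rI14 m ρ₂ = 0 := by
  interval_cases m
  · exact ⟨_, _, by positivity, sqrt_three_halves_lt_four, rI14_one_sqrt, rI14_one_four⟩
  · obtain ⟨ρ₁, ⟨hρ₁, hρ₁'⟩, h₁⟩ := exists_rI14_eq_zero_of_mem_uIcc 2 (a := 1) (b := 2)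
      (by norm_num) (by norm_num [rI14, mem_uIcc])
    obtain ⟨ρ₂, ⟨hρ₂, -⟩, h₂⟩ := exists_rI14_eq_zero_of_mem_uIcc 2 (a := 11) (b := 12)
      (by norm_num) (by norm_num [rI14, mem_uIcc])
    exact ⟨ρ₁, ρ₂, by linarith, by linarith, h₁, h₂⟩

theorem qI14_two_roots {m : ℕ} (h1 : 1 ≤ m) (h2 : m ≤ 2) :
    ∃ ρ₁ ρ₂ : ℝ, 0 < ρ₁ ∧ ρ₁ < ρ₂ ∧ qI14 m ρ₁ = 0 ∧ qI14 m ρ₂ = 0 ∧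
      (∀ x : ℝ, 0 < x → qI14 m x = 0 → x = ρ₁ ∨ x = ρ₂) ∧
      (∀ μ : ℝ, 0 < μ → (0 ≤ qI14 m μ ↔ μ ≤ ρ₁ ∨ ρ₂ ≤ μ)) := by
  obtain ⟨ρ₁, ρ₂, hρ₁, hρ, h₁, h₂⟩ := exists_two_pos_roots_rI14 h1 h2
  have hd : 0 < (rI14Cubic m).d := by norm_num [rI14Cubic]
  have ha : 0 ≤ (rI14Cubic m).a := by interval_cases m <;> norm_num [rI14Cubic]
  rw [rI14_eq_eval] at h₁ h₂
  refine ⟨ρ₁, ρ₂, hρ₁, hρ, ?_, ?_, fun x hx hqx => ?_, fun μ hμ => ?_⟩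
  · rwa [qI14_eq_zero_iff hρ₁, rI14_eq_eval]
  · rwa [qI14_eq_zero_iff (hρ₁.trans hρ), rI14_eq_eval]
  · rw [qI14_eq_zero_iff hx, rI14_eq_eval] at hqx
    exact Cubic.eq_of_eval_eq_zero_of_pos_roots hd ha hρ₁ hρ h₁ h₂ hx hqx
  · rw [qI14_nonneg_iff hμ, rI14_eq_eval]
    exact Cubic.eval_nonneg_iff_of_pos_roots hd ha hρ₁ hρ h₁ h₂ hμ

theorem exists_pos_root_rI14 {m : ℕ} (h3 : 3 ≤ m) (h7 : m ≤ 7) : ∃ ρ, 0 < ρ ∧ rI14 m ρ = 0 := by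
  obtain ⟨ρ, ⟨hρ, -⟩, h⟩ := exists_rI14_eq_zero_of_mem_uIcc m (a := 1) (b := 10) (by norm_num)
    (by interval_cases m <;> norm_num [rI14, mem_uIcc])
  exact ⟨ρ, by linarith, h⟩

theorem qI14_nonneg_iff_le_root {m : ℕ} (h3 : 3 ≤ m) (h7 : m ≤ 7) {ρ μ : ℝ} (hρ : 0 < ρ)
    (h : qI14 m ρ = 0) (hμ : 0 < μ) : 0 ≤ qI14 m μ ↔ μ ≤ ρ := by
  have anti : StrictAntiOn (fun x => (rI14Cubic m).toPoly.eval x / x ^ 2) (Ioi 0) := by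
    apply Cubic.strictAntiOn_eval_div_sq <;> interval_cases m <;> norm_num [rI14Cubic]
  rw [qI14_eq_zero_iff hρ, rI14_eq_eval] at h
  rw [qI14_nonneg_iff hμ, rI14_eq_eval]
  exact nonneg_iff_le_of_strictAntiOn_div_pow anti hρ h hμ

/-- Sign of `q_m` for type `I_{1,4}`: positivity for `m ≥ 8`; for `m = 1, 2`
exactly two positive roots `μ_{m,1} < μ_{m,2}` (with `μ_{1,1} = √(3/2)`,
`μ_{1,2} = 4`) characterizing the sign; for `3 ≤ m ≤ 7` exactly one positive
root `μ_m` characterizing the sign. -/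
theorem qI14_sign :
    (∀ m : ℕ, 8 ≤ m → ∀ μ : ℝ, 0 < μ → 0 < qI14 m μ) ∧
    (∀ m : ℕ, 1 ≤ m → m ≤ 2 → ∃ ρ₁ ρ₂ : ℝ, 0 < ρ₁ ∧ ρ₁ < ρ₂ ∧
      qI14 m ρ₁ = 0 ∧ qI14 m ρ₂ = 0 ∧
      (∀ x : ℝ, 0 < x → qI14 m x = 0 → x = ρ₁ ∨ x = ρ₂) ∧
      (∀ μ : ℝ, 0 < μ → (0 ≤ qI14 m μ ↔ μ ≤ ρ₁ ∨ ρ₂ ≤ μ))) ∧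
    qI14 1 (Real.sqrt (3 / 2)) = 0 ∧ qI14 1 4 = 0 ∧ Real.sqrt (3 / 2) < 4 ∧
    (∀ m : ℕ, 3 ≤ m → m ≤ 7 → ∃! r : ℝ, 0 < r ∧ qI14 m r = 0) ∧
    (∀ m : ℕ, 3 ≤ m → m ≤ 7 → ∀ r : ℝ, 0 < r → qI14 m r = 0 →
      ∀ μ : ℝ, 0 < μ → (0 ≤ qI14 m μ ↔ μ ≤ r)) := by
  refine ⟨fun m hm μ hμ => qI14_pos hm hμ, fun m h1 h2 => qI14_two_roots h1 h2,
    by rw [qI14, rI14_one_sqrt, mul_zero], by rw [qI14, rI14_one_four, mul_zero],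
    sqrt_three_halves_lt_four, fun m h3 h7 => ?_,
    fun m h3 h7 r hr hqr μ hμ => qI14_nonneg_iff_le_root h3 h7 hr hqr hμ⟩
  obtain ⟨ρ, hρ, h⟩ := exists_pos_root_rI14 h3 h7
  have hqρ : qI14 m ρ = 0 := (qI14_eq_zero_iff hρ).2 h
  -- by the sign characterization, each positive root of `q_m` lies below every other one
  refine ⟨ρ, ⟨hρ, hqρ⟩, fun x ⟨hx, hqx⟩ => le_antisymm ?_ ?_⟩
  · exact (qI14_nonneg_iff_le_root h3 h7 hρ hqρ hx).1 hqx.ge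
  · exact (qI14_nonneg_iff_le_root h3 h7 hx hqx hρ).1 hqρ.ge
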